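/- Let q be an odd prime power with q ≡ 3 (mod 4). The quadrance graph V_q on vertex set F_q², where X and Y are adjacent iff Q(X,Y) is a nonzero square, is a strongly regular graph with parameters: every vertex has degree (q²-1)/2, any two adjacent vertices have (q²-5)/4 common neighbours, and any two distinct non-adjacent vertices have (q²-1)/4 common neighbours. -/

import Mathlib

open scoped Classical

def quadrance {F : Type*} [Field F] (A B : F × F) : F :=
  (B.1 - A.1) ^ 2 + (B.2 - A.2) ^ 2

def quadAdj {F : Type*} [Field F] (X Y : F × F) : Prop :=
  X ≠ Y ∧ IsSquare (quadrance X Y) ∧ quadrance X Y ≠ 0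

/-!
Let `K` be the quadratic extension of `F`. As `q ^ 2 ≡ 1 (mod 4)`, it contains an `i` with
`i ^ 2 = -1`, and as `-1` is not a square in `F`, the map `(x, y) ↦ x + y i` identifies `F × F`
with `K`. Since `i ^ q = -i`, the Frobenius `z ↦ z ^ q` is complex conjugation, so the quadrance
of `X, Y` is the norm `(Y - X) ^ (q + 1)` of their difference. By Euler's criterion an element of
`K` is a square exactly when its norm is a square in `F`, so the quadrance graph is the Paley graph
of `K`, whose degree and common-neighbour counts follow from the Jacobi sum `J(χ, χ) = -χ(-1)` of
the quadratic character.
-/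

open Finset

section QuadraticChar

variable {K : Type*} [Field K] [Fintype K]

lemma quadraticChar_sum_mul_sub_sub (hK : ringChar K ≠ 2) {a b : K} (hab : a ≠ b) :
    ∑ w : K, quadraticChar K (w - a) * quadraticChar K (w - b) = -1 := by
  set χ := quadraticChar K
  have hc : b - a ≠ 0 := sub_ne_zero.mpr hab.symm
  have hJ : jacobiSum χ χ = -χ (-1) := by
    have := jacobiSum_nontrivial_inv (quadraticChar_ne_one hK)
    rwa [(quadraticChar_isQuadratic K).inv] at this
  calc ∑ w : K, χ (w - a) * χ (w - b)
      = ∑ x : K, χ ((b - a) * x) * χ (-(b - a) * (1 - x)) :=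
        (Fintype.sum_equiv ((Equiv.mulLeft₀ _ hc).trans (Equiv.addLeft a)) _ _ fun x => by
          simp only [Equiv.trans_apply, Equiv.mulLeft₀_apply, Equiv.coe_addLeft]
          ring_nf).symm
    _ = ∑ x : K, χ (-1) * (χ x * χ (1 - x)) := by
        refine sum_congr rfl fun x _ => ?_
        rw [neg_mul, ← neg_one_mul, map_mul, map_mul, map_mul]
        linear_combination (χ (-1) * χ x * χ (1 - x)) * quadraticChar_sq_one hc
    _ = χ (-1) * jacobiSum χ χ := by rw [← mul_sum]; rfl
    _ = -1 := by
        rw [hJ]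
        linear_combination -quadraticChar_sq_one (neg_ne_zero.mpr (one_ne_zero (α := K)))

lemma sum_quadraticChar_sub (hK : ringChar K ≠ 2) (a : K) :
    ∑ z : K, quadraticChar K (z - a) = 0 :=
  ((Equiv.subRight a).sum_comp (quadraticChar K)).trans (quadraticChar_sum_zero hK)

lemma two_mul_ite_quadraticChar_eq_one (z : K) :
    2 * (if quadraticChar K z = 1 then 1 else 0 : ℤ)
      = 1 + quadraticChar K z - if z = 0 then 1 else 0 := by
  by_cases hz : z = 0
  · simp [hz]
  · rcases quadraticChar_dichotomy hz with h | h <;> simp [h, hz]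

lemma two_mul_card_quadraticChar_sub_eq_one (hK : ringChar K ≠ 2) (a : K) :
    2 * (Nat.card {z : K // quadraticChar K (z - a) = 1} : ℤ) = Fintype.card K - 1 := by
  rw [Nat.card_eq_fintype_card, Fintype.card_subtype, natCast_card_filter, mul_sum]
  simp only [two_mul_ite_quadraticChar_eq_one, sub_eq_zero, sum_sub_distrib, sum_add_distrib,
    sum_quadraticChar_sub hK, sum_ite_eq', mem_univ, if_true, sum_const, card_univ]
  ring

lemma four_mul_card_quadraticChar_sub_eq_one_and (hK : ringChar K ≠ 2) {a b : K} (hab : a ≠ b) :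
    4 * (Nat.card {z : K // quadraticChar K (z - a) = 1 ∧ quadraticChar K (z - b) = 1} : ℤ)
      = Fintype.card K - 3 - quadraticChar K (a - b) - quadraticChar K (b - a) := by
  have hind : ∀ z : K,
      4 * (if quadraticChar K (z - a) = 1 ∧ quadraticChar K (z - b) = 1 then 1 else 0 : ℤ)
        = (1 + quadraticChar K (z - a)) * (1 + quadraticChar K (z - b))
          - (if z = a then 1 + quadraticChar K (a - b) else 0)
          - (if z = b then 1 + quadraticChar K (b - a) else 0) := by
    intro z
    rw [show (4 : ℤ) * (if quadraticChar K (z - a) = 1 ∧ quadraticChar K (z - b) = 1 then 1 else 0)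
        = (2 * if quadraticChar K (z - a) = 1 then 1 else 0)
          * (2 * if quadraticChar K (z - b) = 1 then 1 else 0) by split_ifs <;> simp_all,
      two_mul_ite_quadraticChar_eq_one, two_mul_ite_quadraticChar_eq_one]
    by_cases hza : z = a
    · subst hza
      simp [hab, sub_eq_zero]
    · by_cases hzb : z = b
      · subst hzb
        simp [sub_ne_zero.mpr hza, hza]
      · simp [hza, hzb, sub_eq_zero]
  have hsum : ∑ z : K, (1 + quadraticChar K (z - a)) * (1 + quadraticChar K (z - b))
      = Fintype.card K - 1 := by
    simp only [add_mul, one_mul, mul_add, mul_one, sum_add_distrib, sum_quadraticChar_sub hK,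
      quadraticChar_sum_mul_sub_sub hK hab, sum_const, card_univ]
    ring
  rw [Nat.card_eq_fintype_card, Fintype.card_subtype, natCast_card_filter, mul_sum]
  simp only [hind, sum_sub_distrib, hsum, sum_ite_eq', mem_univ, if_true]
  ring

end QuadraticChar

lemma ringChar_ne_two_of_card_mod_four_eq_three {F : Type*} [Field F] [Fintype F]
    (h4 : Fintype.card F % 4 = 3) : ringChar F ≠ 2 := by
  rw [Ne, FiniteField.even_card_iff_char_two]
  omega

lemma not_isSquare_neg_one_of_card_mod_four_eq_three {F : Type*} [Field F] [Fintype F]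
    (h4 : Fintype.card F % 4 = 3) : ¬IsSquare (-1 : F) :=
  fun h => FiniteField.isSquare_neg_one_iff.mp h h4

lemma pow_eq_neg_self_of_mod_four_eq_three {R : Type*} [Ring R] {n : ℕ} (hn : n % 4 = 3) {i : R}
    (hi : i ^ 2 = -1) : i ^ n = -i := by
  obtain ⟨k, hk⟩ : ∃ k, n = 2 * (2 * k + 1) + 1 := ⟨n / 4, by omega⟩
  rw [hk, pow_succ, pow_mul, hi, (odd_two_mul_add_one k).neg_one_pow, neg_one_mul]

lemma eq_zero_of_sq_add_sq_eq_zero {F : Type*} [Field F] (hF : ¬IsSquare (-1 : F)) {x y : F}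
    (h : x ^ 2 + y ^ 2 = 0) : x = 0 ∧ y = 0 := by
  by_cases hy : y = 0
  · exact ⟨pow_eq_zero_iff two_ne_zero |>.mp (by simpa [hy] using h), hy⟩
  · exact absurd ⟨x / y, by field_simp; linear_combination -h⟩ hF

lemma quadrance_comm {F : Type*} [Field F] (X Y : F × F) : quadrance X Y = quadrance Y X := by
  unfold quadrance
  ring

lemma quadAdj_comm {F : Type*} [Field F] {X Y : F × F} : quadAdj X Y ↔ quadAdj Y X := by
  simp only [quadAdj, quadrance_comm X Y, ne_comm]

section GaussianModel

variable {F K : Type*} [Field F] [Field K] [Algebra F K]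

def gaussEmbed (i : K) (v : F × F) : K := algebraMap F K v.1 + algebraMap F K v.2 * i

lemma gaussEmbed_sub (i : K) (v w : F × F) :
    gaussEmbed i v - gaussEmbed i w = gaussEmbed i (v - w) := by
  simp only [gaussEmbed, Prod.fst_sub, Prod.snd_sub, map_sub]
  ring

lemma gaussEmbed_mul_conj {i : K} (hi : i ^ 2 = -1) (x y : F) :
    gaussEmbed i (x, y) * gaussEmbed i (x, -y) = algebraMap F K (x ^ 2 + y ^ 2) := by
  simp only [gaussEmbed, map_add, map_pow, map_neg]
  linear_combination (-(algebraMap F K y) ^ 2) * hi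

lemma gaussEmbed_injective (hF : ¬IsSquare (-1 : F)) {i : K} (hi : i ^ 2 = -1) :
    Function.Injective (gaussEmbed (F := F) i) := by
  suffices ∀ v : F × F, gaussEmbed i v = 0 → v = 0 from fun v w h =>
    sub_eq_zero.mp <| this _ <| by rw [← gaussEmbed_sub, h, sub_self]
  rintro ⟨x, y⟩ hv
  have hxy : algebraMap F K (x ^ 2 + y ^ 2) = 0 := by
    rw [← gaussEmbed_mul_conj hi, hv, zero_mul]
  obtain ⟨rfl, rfl⟩ := eq_zero_of_sq_add_sq_eq_zero hF ((map_eq_zero _).mp hxy)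
  rfl

lemma gaussEmbed_bijective [Fintype F] [Fintype K] (hF : ¬IsSquare (-1 : F))
    (hK : Fintype.card K = Fintype.card F ^ 2) {i : K} (hi : i ^ 2 = -1) :
    Function.Bijective (gaussEmbed (F := F) i) :=
  (Fintype.bijective_iff_injective_and_card _).mpr
    ⟨gaussEmbed_injective hF hi, by rw [Fintype.card_prod, hK, sq]⟩

lemma gaussEmbed_pow_card [Fintype F] (h4 : Fintype.card F % 4 = 3) {i : K} (hi : i ^ 2 = -1)
    (x y : F) : gaussEmbed i (x, y) ^ Fintype.card F = gaussEmbed i (x, -y) := by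
  change FiniteField.frobeniusAlgHom F K _ = _
  simp only [gaussEmbed, map_add, map_mul, AlgHom.commutes, FiniteField.frobeniusAlgHom_apply,
    pow_eq_neg_self_of_mod_four_eq_three h4 hi, map_neg]
  ring

lemma gaussEmbed_pow_card_add_one [Fintype F] (h4 : Fintype.card F % 4 = 3) {i : K}
    (hi : i ^ 2 = -1) (x y : F) :
    gaussEmbed i (x, y) ^ (Fintype.card F + 1) = algebraMap F K (x ^ 2 + y ^ 2) := by
  rw [pow_succ', mul_comm, gaussEmbed_pow_card h4 hi, mul_comm, gaussEmbed_mul_conj hi]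

lemma isSquare_iff_isSquare_of_pow_card_add_one_eq [Fintype F] [Fintype K]
    (hF : ringChar F ≠ 2) (hK : Fintype.card K = Fintype.card F ^ 2) {z : K} {n : F}
    (hzn : z ^ (Fintype.card F + 1) = algebraMap F K n) : IsSquare z ↔ IsSquare n := by
  by_cases hz : z = 0
  · have hn : n = 0 := by simpa [hz] using hzn.symm
    simp [hz, hn]
  have hn : n ≠ 0 := by
    rintro rfl
    exact hz (by simpa using hzn)
  have hK2 : ringChar K ≠ 2 := Algebra.ringChar_eq F K ▸ hF
  have hexp : Fintype.card K / 2 = (Fintype.card F + 1) * (Fintype.card F / 2) := by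
    obtain ⟨m, hm⟩ := Nat.odd_iff.mpr (FiniteField.odd_card_of_char_ne_two hF)
    rw [hK, hm, show (2 * m + 1) / 2 = m by omega,
      show (2 * m + 1) ^ 2 = 2 * ((2 * m + 1 + 1) * m) + 1 by ring]
    omega
  rw [FiniteField.isSquare_iff hK2 hz, FiniteField.isSquare_iff hF hn, hexp, pow_mul, hzn,
    ← map_pow, map_eq_one_iff _ (algebraMap F K).injective]

lemma quadAdj_iff_quadraticChar_eq_one [Fintype F] [Fintype K] (h4 : Fintype.card F % 4 = 3)
    (hK : Fintype.card K = Fintype.card F ^ 2) {i : K} (hi : i ^ 2 = -1) (X Y : F × F) :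
    quadAdj X Y ↔ quadraticChar K (gaussEmbed i Y - gaussEmbed i X) = 1 := by
  rw [gaussEmbed_sub]
  have hnorm : gaussEmbed i (Y - X) ^ (Fintype.card F + 1) = algebraMap F K (quadrance X Y) :=
    gaussEmbed_pow_card_add_one h4 hi _ _
  have hz : gaussEmbed i (Y - X) = 0 ↔ quadrance X Y = 0 := by
    rw [← map_eq_zero_iff _ (algebraMap F K).injective, ← hnorm,
      pow_eq_zero_iff (Nat.succ_ne_zero _)]
  by_cases hn : quadrance X Y = 0
  · simp [quadAdj, hn, hz.mpr hn]
  · rw [quadraticChar_one_iff_isSquare (hz.not.mpr hn), isSquare_iff_isSquare_of_pow_card_add_one_eq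
      (ringChar_ne_two_of_card_mod_four_eq_three h4) hK hnorm]
    refine ⟨fun h => h.2.1, fun h => ⟨?_, h, hn⟩⟩
    rintro rfl
    simp [quadrance] at hn

lemma quadraticChar_gaussEmbed_sub [Fintype F] [Fintype K] (h4 : Fintype.card F % 4 = 3)
    (hK : Fintype.card K = Fintype.card F ^ 2) {i : K} (hi : i ^ 2 = -1) {X Y : F × F}
    (hXY : X ≠ Y) :
    quadraticChar K (gaussEmbed i Y - gaussEmbed i X) = if quadAdj X Y then 1 else -1 := by
  have hne : gaussEmbed i Y - gaussEmbed i X ≠ 0 := sub_ne_zero.mpr <|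
    (gaussEmbed_injective (not_isSquare_neg_one_of_card_mod_four_eq_three h4) hi).ne hXY.symm
  split_ifs with h
  · exact (quadAdj_iff_quadraticChar_eq_one h4 hK hi X Y).mp h
  · exact (quadraticChar_eq_neg_one_iff_not_one hne).mpr
      (mt (quadAdj_iff_quadraticChar_eq_one h4 hK hi X Y).mpr h)

lemma two_mul_card_quadAdj_add_one [Fintype F] [Fintype K] (h4 : Fintype.card F % 4 = 3)
    (hK : Fintype.card K = Fintype.card F ^ 2) {i : K} (hi : i ^ 2 = -1) (X : F × F) :
    2 * Nat.card {Y : F × F // quadAdj X Y} + 1 = Fintype.card F ^ 2 := by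
  have hcard : Nat.card {Y : F × F // quadAdj X Y}
      = Nat.card {z : K // quadraticChar K (z - gaussEmbed i X) = 1} :=
    Nat.card_congr <| (Equiv.ofBijective _ <| gaussEmbed_bijective
      (not_isSquare_neg_one_of_card_mod_four_eq_three h4) hK hi).subtypeEquiv
        fun Y => quadAdj_iff_quadraticChar_eq_one h4 hK hi X Y
  have := two_mul_card_quadraticChar_sub_eq_one
    (Algebra.ringChar_eq F K ▸ ringChar_ne_two_of_card_mod_four_eq_three h4) (gaussEmbed i X)
  rw [← hcard, hK] at this
  omega

lemma four_mul_card_common_quadAdj_add [Fintype F] [Fintype K] (h4 : Fintype.card F % 4 = 3)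
    (hK : Fintype.card K = Fintype.card F ^ 2) {i : K} (hi : i ^ 2 = -1) {X Y : F × F}
    (hXY : X ≠ Y) :
    4 * Nat.card {Z : F × F // quadAdj X Z ∧ quadAdj Y Z} + (if quadAdj X Y then 5 else 1)
      = Fintype.card F ^ 2 := by
  have hF := not_isSquare_neg_one_of_card_mod_four_eq_three h4
  have hcard : Nat.card {Z : F × F // quadAdj X Z ∧ quadAdj Y Z}
      = Nat.card {z : K // quadraticChar K (z - gaussEmbed i X) = 1 ∧
          quadraticChar K (z - gaussEmbed i Y) = 1} :=
    Nat.card_congr <| (Equiv.ofBijective _ <| gaussEmbed_bijective hF hK hi).subtypeEquiv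
      fun Z => (quadAdj_iff_quadraticChar_eq_one h4 hK hi X Z).and
        (quadAdj_iff_quadraticChar_eq_one h4 hK hi Y Z)
  have := four_mul_card_quadraticChar_sub_eq_one_and
    (Algebra.ringChar_eq F K ▸ ringChar_ne_two_of_card_mod_four_eq_three h4)
    ((gaussEmbed_injective hF hi).ne hXY)
  rw [← hcard, hK, quadraticChar_gaussEmbed_sub h4 hK hi hXY,
    quadraticChar_gaussEmbed_sub h4 hK hi hXY.symm, quadAdj_comm (X := Y)] at this
  split_ifs at this ⊢ <;> omega

end GaussianModel

theorem stmt_17_general (F : Type*) [Field F] [Fintype F] (q : ℕ)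
    (hcard : Fintype.card F = q) (h4 : q % 4 = 3) :
    (∀ X : F × F, Nat.card {Y : F × F // quadAdj X Y} = (q ^ 2 - 1) / 2) ∧
    (∀ X Y : F × F, quadAdj X Y →
      Nat.card {Z : F × F // quadAdj X Z ∧ quadAdj Y Z} = (q ^ 2 - 5) / 4) ∧
    (∀ X Y : F × F, X ≠ Y → ¬ quadAdj X Y →
      Nat.card {Z : F × F // quadAdj X Z ∧ quadAdj Y Z} = (q ^ 2 - 1) / 4) := by
  subst hcard
  have := Fact.mk (CharP.char_is_prime F (ringChar F))
  let K := FiniteField.Extension F (ringChar F) 2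
  let : Fintype K := Fintype.ofFinite K
  have hK : Fintype.card K = Fintype.card F ^ 2 := by
    simpa only [Nat.card_eq_fintype_card] using FiniteField.natCard_extension F (ringChar F) 2
  obtain ⟨i, hi⟩ : ∃ i : K, i ^ 2 = -1 := by
    obtain ⟨i, hi⟩ := FiniteField.isSquare_neg_one_iff.mpr (by rw [hK, Nat.pow_mod, h4]; decide)
    exact ⟨i, by rw [sq, hi]⟩
  refine ⟨fun X => ?_, fun X Y hXY => ?_, fun X Y hne hXY => ?_⟩
  · have := two_mul_card_quadAdj_add_one h4 hK hi X
    omega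
  · have := four_mul_card_common_quadAdj_add h4 hK hi hXY.1
    rw [if_pos hXY] at this
    omega
  · have := four_mul_card_common_quadAdj_add h4 hK hi hne
    rw [if_neg hXY] at this
    omega

theorem stmt_17 (F : Type*) [Field F] [Fintype F] (q : ℕ)
    (hcard : Fintype.card F = q) (hodd : Odd q) (h4 : q % 4 = 3) :
    (∀ X : F × F, Nat.card {Y : F × F // quadAdj X Y} = (q ^ 2 - 1) / 2) ∧
    (∀ X Y : F × F, quadAdj X Y →
      Nat.card {Z : F × F // quadAdj X Z ∧ quadAdj Y Z} = (q ^ 2 - 5) / 4) ∧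
    (∀ X Y : F × F, X ≠ Y → ¬ quadAdj X Y →
      Nat.card {Z : F × F // quadAdj X Z ∧ quadAdj Y Z} = (q ^ 2 - 1) / 4) :=
  stmt_17_general F q hcard h4
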